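/- Let R be a reduced crystallographic root system in a finite-dimensional real inner product space E, let S be a base of R, and let H lie in the open fundamental Weyl chamber K(S). Suppose S(H) = {α ∈ R : ⟨α, H⟩ = 2} is nonempty, and let R(H) be the set of all images of elements of S(H) under the group generated by the reflections s_β for β ∈ S(H). Then R(H) is a reduced crystallographic root system in the span of S(H), R(H) ⊆ R, and S(H) is a base of R(H): every element of R(H) is an integer linear combination of elements of S(H) with coefficients all nonnegative or all nonpositive. -/

import Mathlib

open scoped RealInnerProductSpace

/-- A reduced crystallographic root system in a real inner product space `E`:
a finite set of nonzero vectors, with integral Cartan numbers, closed under the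
reflections it defines, and such that the only multiples of a root `α` that are
roots are `±α`. -/
def IsRootSystem {E : Type*} [NormedAddCommGroup E] [InnerProductSpace ℝ E]
    (R : Set E) : Prop :=
  R.Finite ∧ (0 : E) ∉ R ∧
  (∀ α ∈ R, ∀ β ∈ R, ∃ n : ℤ, 2 * ⟪β, α⟫ / ⟪α, α⟫ = (n : ℝ)) ∧
  (∀ α ∈ R, ∀ β ∈ R, β - (2 * ⟪β, α⟫ / ⟪α, α⟫) • α ∈ R) ∧
  (∀ α ∈ R, ∀ t : ℝ, t • α ∈ R → t = 1 ∨ t = -1)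

/-- `S` is a base (simple system) of the root system `R`: a linearly independent
subset such that every root is an integer linear combination of elements of `S`
with coefficients all nonnegative or all nonpositive. -/
def IsBase {E : Type*} [NormedAddCommGroup E] [InnerProductSpace ℝ E]
    (R S : Set E) : Prop :=
  S ⊆ R ∧ LinearIndependent ℝ ((↑) : S → E) ∧
  ∀ β ∈ R, ∃ c : E →₀ ℤ, ↑c.support ⊆ S ∧
    β = c.sum (fun α n => (n : ℝ) • α) ∧
    ((∀ α, 0 ≤ c α) ∨ (∀ α, c α ≤ 0))

/-- The reflection `s_β : x ↦ x - (2⟪x,β⟫/⟪β,β⟫) β` in the hyperplane orthogonal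
to `β`, as an element of the monoid `Function.End E` of self-maps of `E`. -/
noncomputable def sRefl {E : Type*} [NormedAddCommGroup E] [InnerProductSpace ℝ E]
    (β : E) : Function.End E :=
  fun x => x - (2 * ⟪x, β⟫ / ⟪β, β⟫) • β

/-- The set of all images of elements of `Sg` under the group generated by the
reflections `s_β`, `β ∈ Sg` (since each reflection is an involution, this group
coincides with the generated monoid of self-maps). -/
noncomputable def subSystem {E : Type*} [NormedAddCommGroup E] [InnerProductSpace ℝ E]
    (Sg : Set E) : Set E :=
  {x | ∃ w ∈ Submonoid.closure (sRefl '' Sg), ∃ α ∈ Sg, x = w α}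

/-- `β` is an integer linear combination of elements of `S'` with all
coefficients nonnegative. -/
def IsNonnegCombo {E : Type*} [NormedAddCommGroup E] [InnerProductSpace ℝ E]
    (S' : Set E) (β : E) : Prop :=
  ∃ c : E →₀ ℤ, ↑c.support ⊆ S' ∧ β = c.sum (fun α n => (n : ℝ) • α) ∧ ∀ α, 0 ≤ c α

/-- The inverse root `α* = 2α/⟪α,α⟫`. -/
noncomputable def invRoot {E : Type*} [NormedAddCommGroup E] [InnerProductSpace ℝ E]
    (α : E) : E :=
  (2 / ⟪α, α⟫) • α

/-!
Since `s_{s_β γ} = s_β s_γ s_β`, the set `R(H)` is closed under its own reflections, and as a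
subset of `R` it inherits the remaining root-system axioms. Every root pairs with `H` to a nonzero
number, and every element of `R(H)` lies in the `ℤ`-span of `S(H)`, hence pairs with `H` to an
even integer. Two distinct elements of `S(H)` with positive inner product would have a difference
in `R(H)` orthogonal to `H`; so `S(H)` is obtuse, and lying in the half-space `⟪·, H⟫ > 0` it is
linearly independent. A positive `γ ∈ R(H) \ S(H)` has positive inner product with some
`α ∈ S(H)`, as otherwise `S(H) ∪ {γ}` would be linearly independent while `γ` is in the span of
`S(H)`; then `γ - α ∈ R(H)` and `⟪γ - α, H⟫ = ⟪γ, H⟫ - 2`, so induction on `⟪γ, H⟫` writes `γ`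
as a nonnegative integer combination of `S(H)`.
-/

section

variable {E : Type*} [NormedAddCommGroup E] [InnerProductSpace ℝ E]

lemma sRefl_apply (β x : E) : sRefl β x = x - (2 * ⟪x, β⟫ / ⟪β, β⟫) • β := rfl

lemma sRefl_eq_reflection (β x : E) : sRefl β x = (ℝ ∙ β)ᗮ.reflection x := by
  rw [Submodule.reflection_orthogonal_apply, Submodule.reflection_singleton_apply, sRefl_apply,
    real_inner_comm, real_inner_self_eq_norm_sq]
  simp only [RCLike.ofReal_real_eq_id, id]
  module

lemma sRefl_self (β : E) : sRefl β β = -β := by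
  rw [sRefl_eq_reflection, Submodule.reflection_orthogonalComplement_singleton_eq_neg]

lemma sRefl_map (g : E ≃ₗᵢ[ℝ] E) (γ x : E) : sRefl (g γ) x = g (sRefl γ (g.symm x)) := by
  have h : ⟪g.symm x, γ⟫ = ⟪x, g γ⟫ := by rw [← g.inner_map_map, g.apply_symm_apply]
  simp only [sRefl_apply, map_sub, map_smul, g.apply_symm_apply, g.inner_map_map, h]

lemma sRefl_sRefl_conj (β γ x : E) :
    sRefl (sRefl β γ) x = sRefl β (sRefl γ (sRefl β x)) := by
  simpa only [← sRefl_eq_reflection, Submodule.reflection_symm] using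
    sRefl_map (ℝ ∙ β)ᗮ.reflection γ x

namespace IsRootSystem

variable {R : Set E} (hR : IsRootSystem R)
include hR

lemma sRefl_mem {α β : E} (hα : α ∈ R) (hβ : β ∈ R) : sRefl α β ∈ R := hR.2.2.2.1 α hα β hβ

lemma neg_mem {α : E} (hα : α ∈ R) : -α ∈ R := sRefl_self α ▸ hR.sRefl_mem hα hα

lemma sub_mem_of_inner_pos {α β : E} (hα : α ∈ R) (hβ : β ∈ R) (hne : α ≠ β)
    (hpos : 0 < ⟪α, β⟫) : α - β ∈ R := by
  have hαα : 0 < ⟪α, α⟫ := real_inner_self_pos.2 (ne_of_mem_of_not_mem hα hR.2.1)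
  have hββ : 0 < ⟪β, β⟫ := real_inner_self_pos.2 (ne_of_mem_of_not_mem hβ hR.2.1)
  have hβα : ⟪β, α⟫ = ⟪α, β⟫ := real_inner_comm α β
  obtain ⟨m, hm⟩ := hR.2.2.1 β hβ α hα
  obtain ⟨n, hn⟩ := hR.2.2.1 α hα β hβ
  have hm₀ : 0 < m := by exact_mod_cast (hm ▸ by positivity : (0 : ℝ) < m)
  have hn₀ : 0 < n := by exact_mod_cast (hn ▸ by rw [hβα]; positivity : (0 : ℝ) < n)
  rcases (by omega : m = 1 ∨ n = 1 ∨ (2 ≤ m ∧ 2 ≤ n)) with h | h | ⟨hm₂, hn₂⟩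
  · have := hR.sRefl_mem hβ hα
    rwa [sRefl_apply, hm, h, Int.cast_one, one_smul] at this
  · have := hR.neg_mem (hR.sRefl_mem hα hβ)
    rwa [sRefl_apply, hn, h, Int.cast_one, one_smul, neg_sub] at this
  · -- Both Cartan numbers `≥ 2` would force `‖α - β‖² ≤ 0`.
    have h₁ : ⟪β, β⟫ ≤ ⟪α, β⟫ := by
      have : (2 : ℝ) ≤ m := by exact_mod_cast hm₂
      rw [← hm, le_div_iff₀ hββ] at this; linarith
    have h₂ : ⟪α, α⟫ ≤ ⟪α, β⟫ := by
      have : (2 : ℝ) ≤ n := by exact_mod_cast hn₂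
      rw [← hn, le_div_iff₀ hαα] at this; linarith
    have : ⟪α - β, α - β⟫ ≤ 0 := by
      rw [inner_sub_sub_self]; linarith
    exact absurd (sub_eq_zero.1 (real_inner_self_nonpos.1 this)) hne

end IsRootSystem

section subSystem

variable {SH : Set E}

lemma subset_subSystem : SH ⊆ subSystem SH :=
  fun α hα => ⟨1, Submonoid.one_mem _, α, hα, rfl⟩

lemma subSystem_subset {T : Set E} (hSH : SH ⊆ T) (hT : ∀ β ∈ SH, Set.MapsTo (sRefl β) T T) :
    subSystem SH ⊆ T := by
  rintro _ ⟨w, hw, α, hα, rfl⟩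
  induction hw using Submonoid.closure_induction_left with
  | one => exact hSH hα
  | mul_left _ hs w _ ih =>
    obtain ⟨β, hβ, rfl⟩ := hs
    exact hT β hβ ih

lemma sRefl_mem_subSystem_of_mem {β x : E} (hβ : β ∈ SH) (hx : x ∈ subSystem SH) :
    sRefl β x ∈ subSystem SH := by
  obtain ⟨w, hw, α, hα, rfl⟩ := hx
  exact ⟨sRefl β * w, Submonoid.mul_mem _ (Submonoid.subset_closure ⟨β, hβ, rfl⟩) hw, α, hα, rfl⟩

lemma sRefl_mem_subSystem {γ x : E} (hγ : γ ∈ subSystem SH) (hx : x ∈ subSystem SH) :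
    sRefl γ x ∈ subSystem SH := by
  refine subSystem_subset (T := {γ | ∀ x ∈ subSystem SH, sRefl γ x ∈ subSystem SH})
    (fun β hβ x hx => sRefl_mem_subSystem_of_mem hβ hx) (fun β hβ γ hγ x hx => ?_) hγ x hx
  rw [sRefl_sRefl_conj]
  exact sRefl_mem_subSystem_of_mem hβ (hγ _ (sRefl_mem_subSystem_of_mem hβ hx))

lemma subSystem_subset_span : subSystem SH ⊆ Submodule.span ℝ SH :=
  subSystem_subset Submodule.subset_span fun _ hβ _ hx =>
    sub_mem hx (Submodule.smul_mem _ _ (Submodule.subset_span hβ))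

variable {R : Set E} (hR : IsRootSystem R) (hSHR : SH ⊆ R)
include hR hSHR

lemma subSystem_subset_of_subset : subSystem SH ⊆ R :=
  subSystem_subset hSHR fun _ hβ _ hx => hR.sRefl_mem (hSHR hβ) hx

lemma subSystem_subset_span_int : subSystem SH ⊆ Submodule.span ℤ SH := by
  suffices subSystem SH ⊆ R ∩ Submodule.span ℤ SH from fun x hx => (this hx).2
  refine subSystem_subset (fun α hα => ⟨hSHR hα, Submodule.subset_span hα⟩) ?_
  rintro β hβ x ⟨hxR, hxS⟩
  obtain ⟨n, hn⟩ := hR.2.2.1 β (hSHR hβ) x hxR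
  refine ⟨hR.sRefl_mem (hSHR hβ) hxR, ?_⟩
  rw [sRefl_apply, hn, Int.cast_smul_eq_zsmul]
  exact sub_mem hxS (Submodule.smul_mem _ n (Submodule.subset_span hβ))

lemma IsRootSystem.subSystem : IsRootSystem (subSystem SH) := by
  have hsub := subSystem_subset_of_subset hR hSHR
  exact ⟨hR.1.subset hsub, fun h => hR.2.1 (hsub h),
    fun α hα β hβ => hR.2.2.1 α (hsub hα) β (hsub hβ),
    fun α hα β hβ => sRefl_mem_subSystem hα hβ,
    fun α hα t ht => hR.2.2.2.2 α (hsub hα) t (hsub ht)⟩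

end subSystem

section Obtuse

variable {ι : Type*} {v : ι → E} {H : E}

lemma inner_sum_smul_nonpos (hv : Pairwise fun i j => ⟪v i, v j⟫ ≤ 0) (s : Finset ι)
    {a b : ι → ℝ} (ha : 0 ≤ a) (hb : 0 ≤ b) (hab : ∀ i, a i * b i = 0) :
    ⟪∑ i ∈ s, a i • v i, ∑ j ∈ s, b j • v j⟫ ≤ 0 := by
  rw [sum_inner]
  simp only [inner_sum, real_inner_smul_left, real_inner_smul_right]
  refine Finset.sum_nonpos fun i _ => Finset.sum_nonpos fun j _ => ?_
  rcases eq_or_ne i j with rfl | hij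
  · rw [← mul_assoc, mul_comm (b i), hab, zero_mul]
  · exact mul_nonpos_of_nonneg_of_nonpos (hb j) (mul_nonpos_of_nonneg_of_nonpos (ha i) (hv hij))

lemma eq_zero_of_sum_smul_eq_zero (hH : ∀ i, 0 < ⟪v i, H⟫) {s : Finset ι} {a : ι → ℝ}
    (ha : 0 ≤ a) (h : ∑ i ∈ s, a i • v i = 0) {i : ι} (hi : i ∈ s) : a i = 0 := by
  have hsum : ∑ j ∈ s, a j * ⟪v j, H⟫ = 0 := by
    simpa only [sum_inner, real_inner_smul_left, inner_zero_left] using congrArg (⟪·, H⟫) h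
  have := (Finset.sum_eq_zero_iff_of_nonneg fun j _ => mul_nonneg (ha j) (hH j).le).1 hsum i hi
  exact (mul_eq_zero.1 this).resolve_right (hH i).ne'

lemma linearIndependent_of_pairwise_inner_nonpos (hH : ∀ i, 0 < ⟪v i, H⟫)
    (hv : Pairwise fun i j => ⟪v i, v j⟫ ≤ 0) : LinearIndependent ℝ v := by
  rw [linearIndependent_iff']
  intro s g hg i hi
  set p := ∑ j ∈ s, (g j)⁺ • v j
  set q := ∑ j ∈ s, (g j)⁻ • v j
  have hpq : p = q := by
    rw [← sub_eq_zero, ← hg, ← Finset.sum_sub_distrib]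
    simp only [← sub_smul, posPart_sub_negPart]
  have hdisj : ∀ j, (g j)⁺ * (g j)⁻ = 0 := fun j => by
    rcases le_total (g j) 0 with h | h <;> simp [h]
  have hp : p = 0 := real_inner_self_nonpos.1 <| by
    nth_rewrite 2 [hpq]
    exact inner_sum_smul_nonpos hv s (fun j => posPart_nonneg _) (fun j => negPart_nonneg _) hdisj
  rw [← posPart_sub_negPart (g i),
    eq_zero_of_sum_smul_eq_zero hH (fun j => posPart_nonneg (g j)) hp hi,
    eq_zero_of_sum_smul_eq_zero hH (fun j => negPart_nonneg (g j)) (hpq.symm.trans hp) hi, sub_zero]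

lemma linearIndepOn_of_pairwise_inner_nonpos {s : Set E} (hH : ∀ v ∈ s, 0 < ⟪v, H⟫)
    (hs : s.Pairwise fun v w => ⟪v, w⟫ ≤ 0) : LinearIndepOn ℝ id s :=
  linearIndependent_of_pairwise_inner_nonpos (fun v => hH v v.2)
    fun v w hvw => hs v.2 w.2 (Subtype.coe_injective.ne hvw)

end Obtuse

section Combo

variable {S : Set E}

lemma Finsupp.sum_neg_intCast_smul (c : E →₀ ℤ) :
    (-c).sum (fun α n => (n : ℝ) • α) = -c.sum (fun α n => (n : ℝ) • α) := by
  simp [Finsupp.sum, ← Finset.sum_neg_distrib]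

lemma isNonnegCombo_of_mem {α : E} (hα : α ∈ S) : IsNonnegCombo S α := by
  classical
  refine ⟨Finsupp.single α 1, by simpa using hα, by simp, fun β => ?_⟩
  rw [Finsupp.single_apply]
  split_ifs <;> norm_num

lemma IsNonnegCombo.add {β γ : E} (hβ : IsNonnegCombo S β) (hγ : IsNonnegCombo S γ) :
    IsNonnegCombo S (β + γ) := by
  classical
  obtain ⟨c, hcS, rfl, hc⟩ := hβ
  obtain ⟨d, hdS, rfl, hd⟩ := hγ
  refine ⟨c + d, ?_, ?_, fun α => add_nonneg (hc α) (hd α)⟩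
  · exact (Finset.coe_subset.2 Finsupp.support_add).trans (by simpa using Set.union_subset hcS hdS)
  · rw [Finsupp.sum_add_index' (fun _ => by simp) fun _ _ _ => by push_cast; rw [add_smul]]

lemma exists_signed_combo_of_isNonnegCombo {β : E}
    (h : IsNonnegCombo S β ∨ IsNonnegCombo S (-β)) :
    ∃ c : E →₀ ℤ, ↑c.support ⊆ S ∧ β = c.sum (fun α n => (n : ℝ) • α) ∧
      ((∀ α, 0 ≤ c α) ∨ (∀ α, c α ≤ 0)) := by
  rcases h with ⟨c, hcS, hc, hnn⟩ | ⟨c, hcS, hc, hnn⟩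
  · exact ⟨c, hcS, hc, Or.inl hnn⟩
  · refine ⟨-c, by simpa using hcS, ?_, Or.inr fun α => by simpa using hnn α⟩
    rw [Finsupp.sum_neg_intCast_smul, ← hc, neg_neg]

variable {H : E} (hH : ∀ α ∈ S, 0 < ⟪α, H⟫)
include hH

lemma inner_sum_intCast_smul_pos {c : E →₀ ℤ} (hcS : ↑c.support ⊆ S) (hc : ∀ α, 0 ≤ c α)
    (hne : c ≠ 0) : 0 < ⟪c.sum (fun α n => (n : ℝ) • α), H⟫ := by
  rw [Finsupp.sum, sum_inner]
  obtain ⟨α, hα⟩ := Finsupp.support_nonempty_iff.2 hne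
  refine Finset.sum_pos' (fun β hβ => ?_) ⟨α, hα, ?_⟩ <;> rw [real_inner_smul_left]
  · exact mul_nonneg (by exact_mod_cast hc β) (hH β (hcS hβ)).le
  · exact mul_pos (by exact_mod_cast (hc α).lt_of_ne' (Finsupp.mem_support_iff.1 hα))
      (hH α (hcS hα))

lemma IsBase.inner_ne_zero {R : Set E} (hR : (0 : E) ∉ R) (hS : IsBase R S) {γ : E}
    (hγ : γ ∈ R) : ⟪γ, H⟫ ≠ 0 := by
  obtain ⟨c, hcS, rfl, hc⟩ := hS.2.2 γ hγ
  have hne : c ≠ 0 := by rintro rfl; simp at hγ; exact hR hγ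
  rcases hc with hc | hc
  · exact (inner_sum_intCast_smul_pos hH hcS hc hne).ne'
  · have := inner_sum_intCast_smul_pos hH (c := -c) (by simpa using hcS)
      (fun α => by simpa using hc α) (neg_ne_zero.2 hne)
    rw [Finsupp.sum_neg_intCast_smul, inner_neg_left] at this
    linarith

end Combo

section SubSystemOfSH

variable {R S SH : Set E} {H : E} (hR : IsRootSystem R) (hS : IsBase R S)
  (hH : ∀ α ∈ S, 0 < ⟪α, H⟫) (hSH : SH = {α ∈ R | ⟪α, H⟫ = 2})

include hSH in
lemma subset_of_eq_sep : SH ⊆ R := hSH ▸ Set.sep_subset _ _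

include hSH in
lemma inner_eq_two_of_eq_sep {α : E} (hα : α ∈ SH) : ⟪α, H⟫ = 2 := by
  rw [hSH] at hα; exact hα.2

include hR hSH in
lemma exists_inner_eq_two_mul_of_mem_subSystem {γ : E} (hγ : γ ∈ subSystem SH) :
    ∃ k : ℤ, ⟪γ, H⟫ = 2 * k := by
  have hγℤ := subSystem_subset_span_int hR (subset_of_eq_sep hSH) hγ
  clear hγ
  induction hγℤ using Submodule.span_induction with
  | mem α hα => exact ⟨1, by rw [inner_eq_two_of_eq_sep hSH hα, Int.cast_one, mul_one]⟩
  | zero => exact ⟨0, by simp⟩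
  | add x y _ _ hx hy =>
    obtain ⟨k, hk⟩ := hx
    obtain ⟨l, hl⟩ := hy
    exact ⟨k + l, by rw [inner_add_left, hk, hl]; push_cast; ring⟩
  | smul n x _ hx =>
    obtain ⟨k, hk⟩ := hx
    exact ⟨n * k, by rw [← Int.cast_smul_eq_zsmul ℝ, real_inner_smul_left, hk]; push_cast; ring⟩

include hR hS hH hSH

lemma inner_ne_zero_of_mem_subSystem {γ : E} (hγ : γ ∈ subSystem SH) : ⟪γ, H⟫ ≠ 0 :=
  hS.inner_ne_zero hH hR.2.1 (subSystem_subset_of_subset hR (subset_of_eq_sep hSH) hγ)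

lemma pairwise_inner_nonpos_of_eq_sep : SH.Pairwise fun α β => ⟪α, β⟫ ≤ 0 := by
  intro α hα β hβ hne
  by_contra! hpos
  have hsub := (hR.subSystem (subset_of_eq_sep hSH)).sub_mem_of_inner_pos
    (subset_subSystem hα) (subset_subSystem hβ) hne hpos
  refine inner_ne_zero_of_mem_subSystem hR hS hH hSH hsub ?_
  rw [inner_sub_left, inner_eq_two_of_eq_sep hSH hα, inner_eq_two_of_eq_sep hSH hβ, sub_self]

lemma linearIndepOn_of_eq_sep : LinearIndepOn ℝ id SH :=
  linearIndepOn_of_pairwise_inner_nonpos (H := H)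
    (fun α hα => by rw [inner_eq_two_of_eq_sep hSH hα]; norm_num)
    (pairwise_inner_nonpos_of_eq_sep hR hS hH hSH)

lemma exists_inner_pos_of_mem_subSystem {γ : E} (hγ : γ ∈ subSystem SH) (hγH : 0 < ⟪γ, H⟫)
    (hγSH : γ ∉ SH) : ∃ α ∈ SH, 0 < ⟪γ, α⟫ := by
  by_contra! hγα
  have hind : LinearIndepOn ℝ id (insert γ SH) := by
    refine linearIndepOn_of_pairwise_inner_nonpos (H := H) ?_ ?_
    · rintro v (rfl | hv)
      · exact hγH
      · rw [inner_eq_two_of_eq_sep hSH hv]; norm_num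
    · refine Set.pairwise_insert.2 ⟨pairwise_inner_nonpos_of_eq_sep hR hS hH hSH,
        fun α hα _ => ⟨hγα α hα, real_inner_comm γ α ▸ hγα α hα⟩⟩
  exact ((linearIndepOn_id_insert hγSH).1 hind).2 (subSystem_subset_span hγ)

lemma isNonnegCombo_of_inner_eq_two_mul_succ (n : ℕ) :
    ∀ γ ∈ subSystem SH, ⟪γ, H⟫ = 2 * (n + 1) → IsNonnegCombo SH γ := by
  have hΦ := hR.subSystem (subset_of_eq_sep hSH)
  induction n with
  | zero =>
    intro γ hγ hγH
    refine isNonnegCombo_of_mem ?_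
    rw [hSH]
    exact ⟨subSystem_subset_of_subset hR (subset_of_eq_sep hSH) hγ, by simpa using hγH⟩
  | succ n ih =>
    intro γ hγ hγH
    have hγSH : γ ∉ SH := fun h => by
      rw [inner_eq_two_of_eq_sep hSH h] at hγH; push_cast at hγH; linarith
    obtain ⟨α, hα, hγα⟩ := exists_inner_pos_of_mem_subSystem hR hS hH hSH hγ
      (by rw [hγH]; positivity) hγSH
    have hsub : γ - α ∈ subSystem SH :=
      hΦ.sub_mem_of_inner_pos hγ (subset_subSystem hα) (ne_of_mem_of_not_mem hα hγSH).symm hγα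
    have hrec := ih (γ - α) hsub <| by
      rw [inner_sub_left, hγH, inner_eq_two_of_eq_sep hSH hα]; push_cast; ring
    simpa only [sub_add_cancel] using hrec.add (isNonnegCombo_of_mem hα)

lemma isNonnegCombo_of_mem_subSystem_of_inner_pos {γ : E} (hγ : γ ∈ subSystem SH)
    (hγH : 0 < ⟪γ, H⟫) : IsNonnegCombo SH γ := by
  obtain ⟨k, hk⟩ := exists_inner_eq_two_mul_of_mem_subSystem hR hSH hγ
  obtain ⟨n, rfl⟩ : ∃ n : ℕ, k = n + 1 := ⟨(k - 1).toNat, by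
    have : (0 : ℝ) < k := by linarith
    have : 0 < k := by exact_mod_cast this
    omega⟩
  exact isNonnegCombo_of_inner_eq_two_mul_succ hR hS hH hSH n γ hγ (by rw [hk]; push_cast; ring)

end SubSystemOfSH

end

theorem subSystem_of_SH_isRootSystem_general
    {E : Type*} [NormedAddCommGroup E] [InnerProductSpace ℝ E]
    (R S : Set E) (hR : IsRootSystem R) (hS : IsBase R S)
    (H : E) (hH : ∀ α ∈ S, 0 < ⟪α, H⟫)
    (SH : Set E) (hSH : SH = {α ∈ R | ⟪α, H⟫ = 2}) :
    IsRootSystem (subSystem SH) ∧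
    subSystem SH ⊆ R ∧
    subSystem SH ⊆ (Submodule.span ℝ SH : Set E) ∧
    IsBase (subSystem SH) SH := by
  have hSHR := subset_of_eq_sep hSH
  refine ⟨hR.subSystem hSHR, subSystem_subset_of_subset hR hSHR, subSystem_subset_span,
    subset_subSystem, ?_, fun γ hγ => exists_signed_combo_of_isNonnegCombo ?_⟩
  · exact linearIndepOn_of_eq_sep hR hS hH hSH
  · rcases (inner_ne_zero_of_mem_subSystem hR hS hH hSH hγ).lt_or_gt with hneg | hpos
    · refine Or.inr (isNonnegCombo_of_mem_subSystem_of_inner_pos hR hS hH hSH ?_ ?_)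
      · exact (hR.subSystem hSHR).neg_mem hγ
      · rw [inner_neg_left]; linarith
    · exact Or.inl (isNonnegCombo_of_mem_subSystem_of_inner_pos hR hS hH hSH hγ hpos)

/-- For `H` in the open fundamental Weyl chamber with `S(H) = {α ∈ R : ⟪α,H⟫ = 2}`
nonempty, the set `R(H)` of images of `S(H)` under the group generated by the
reflections in elements of `S(H)` is a reduced crystallographic root system lying
in the span of `S(H)`, it is contained in `R`, and `S(H)` is a base of `R(H)`. -/
theorem subSystem_of_SH_isRootSystem
    {E : Type*} [NormedAddCommGroup E] [InnerProductSpace ℝ E] [FiniteDimensional ℝ E]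
    (R S : Set E) (hR : IsRootSystem R) (hS : IsBase R S)
    (H : E) (hH : ∀ α ∈ S, 0 < ⟪α, H⟫)
    (SH : Set E) (hSH : SH = {α ∈ R | ⟪α, H⟫ = 2}) (hne : SH.Nonempty) :
    IsRootSystem (subSystem SH) ∧
    subSystem SH ⊆ R ∧
    subSystem SH ⊆ (Submodule.span ℝ SH : Set E) ∧
    IsBase (subSystem SH) SH :=
  subSystem_of_SH_isRootSystem_general R S hR hS H hH SH hSH
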